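/- Let n ≥ 1, τ > 0, γ > 0, ρ > 0, and ω* ∈ ℝ^n. Then the Lebesgue measure of the set of non-Diophantine frequency vectors in the ball, namely {ω ∈ ℝ^n : ‖ω − ω*‖_∞ ≤ ρ and there exists k ∈ ℤ^n \ {0} with |k·ω| < γ/|k|₁^τ}, is at most (2ρ)^{n−1} · 2γ · Σ_{k ∈ ℤ^n \ {0}} 1/(|k|₁^τ · ‖k‖_∞), the sum being taken in [0,∞]. -/

import Mathlib

open MeasureTheory Set

/-!
Cover the set by the slabs `|k·ω| < γ/|k|₁^τ`, one for each `k ≠ 0`, and bound each slab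
separately. Pick a coordinate `i` with `|kᵢ| = ‖k‖_∞`: by Fubini, slicing in the direction `eᵢ`,
every slice is an interval of length `2γ/(|k|₁^τ |kᵢ|)`, and it is empty unless the other
coordinates lie in a cube of side `2ρ`.
-/

theorem volume_setOf_abs_mul_add_lt {a : ℝ} (ha : a ≠ 0) (c ε : ℝ) :
    volume {x : ℝ | |a * x + c| < ε} = ENNReal.ofReal (2 * (ε / |a|)) := by
  have : {x : ℝ | |a * x + c| < ε} = Metric.ball (-(c / a)) (ε / |a|) := by
    ext x
    rw [mem_ofPred_eq, Metric.mem_ball, Real.dist_eq, lt_div_iff₀ (abs_pos.2 ha), ← abs_mul]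
    congr! 2
    field_simp
    ring
  rw [this, Real.volume_ball]

theorem Fin.sum_mul_insertNth {R : Type*} [Semiring R] {m : ℕ} (a : Fin (m + 1) → R)
    (i : Fin (m + 1)) (x : R) (y : Fin m → R) :
    ∑ j, a j * Fin.insertNth (α := fun _ => R) i x y j =
      a i * x + ∑ j, a (i.succAbove j) * y j := by
  simp [Fin.sum_univ_succAbove _ i]

theorem Fin.norm_removeNth_sub_le {E : Type*} [SeminormedAddCommGroup E] {m : ℕ}
    (i : Fin (m + 1)) (ω c : Fin (m + 1) → E) :
    ‖i.removeNth ω - i.removeNth c‖ ≤ ‖ω - c‖ :=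
  (pi_norm_le_iff_of_nonneg (norm_nonneg _)).2 fun j => norm_le_pi_norm (ω - c) (i.succAbove j)

theorem volume_slab_le_of_apply_ne_zero {m : ℕ} (a c : Fin (m + 1) → ℝ) {i : Fin (m + 1)}
    (hi : a i ≠ 0) {ρ : ℝ} (hρ : 0 ≤ ρ) (ε : ℝ) :
    volume {ω | ‖ω - c‖ ≤ ρ ∧ |∑ j, a j * ω j| < ε} ≤
      ENNReal.ofReal ((2 * ρ) ^ m) * ENNReal.ofReal (2 * (ε / |a i|)) := by
  set S := {ω | ‖ω - c‖ ≤ ρ ∧ |∑ j, a j * ω j| < ε}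
  have hS : MeasurableSet S :=
    (measurableSet_le (f := fun ω => ‖ω - c‖) (by fun_prop) measurable_const).inter
      (measurableSet_lt (f := fun ω : Fin (m + 1) → ℝ => |∑ j, a j * ω j|) (by fun_prop)
        measurable_const)
  set e := MeasurableEquiv.piFinSuccAbove (fun _ => ℝ) i
  set box := Metric.closedBall (i.removeNth c) ρ
  have hfiber : ∀ y, volume ((fun x => (x, y)) ⁻¹' (e.symm ⁻¹' S)) ≤
      box.indicator (fun _ => ENNReal.ofReal (2 * (ε / |a i|))) y := by
    intro y
    by_cases hy : y ∈ box
    · rw [indicator_of_mem hy, ← volume_setOf_abs_mul_add_lt hi (∑ j, a (i.succAbove j) * y j)]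
      refine measure_mono fun x hx => ?_
      simpa [S, e, MeasurableEquiv.piFinSuccAbove_symm_apply, Fin.sum_mul_insertNth] using hx.2
    · rw [indicator_of_notMem hy, nonpos_iff_eq_zero, measure_eq_zero_iff_ae_notMem]
      refine Filter.Eventually.of_forall fun x hx => hy ?_
      have := Fin.norm_removeNth_sub_le i (i.insertNth x y) c
      simp only [Fin.removeNth_insertNth] at this
      exact this.trans hx.1
  calc volume S = (volume.prod volume) (e.symm ⁻¹' S) :=
        ((volume_preserving_piFinSuccAbove (fun _ => ℝ) i).symm e |>.measure_preimage
          hS.nullMeasurableSet).symm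
    _ = ∫⁻ y, volume ((fun x => (x, y)) ⁻¹' (e.symm ⁻¹' S)) :=
        Measure.prod_apply_symm (e.symm.measurable hS)
    _ ≤ ∫⁻ y, box.indicator (fun _ => ENNReal.ofReal (2 * (ε / |a i|))) y := lintegral_mono hfiber
    _ = ENNReal.ofReal ((2 * ρ) ^ m) * ENNReal.ofReal (2 * (ε / |a i|)) := by
        rw [lintegral_indicator_const Metric.isClosed_closedBall.measurableSet,
          Real.volume_pi_closedBall _ hρ, Fintype.card_fin, mul_comm]

theorem volume_slab_le {n : ℕ} (a c : Fin n → ℝ) (ha : a ≠ 0) {ρ : ℝ} (hρ : 0 ≤ ρ) (ε : ℝ) :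
    volume {ω | ‖ω - c‖ ≤ ρ ∧ |∑ j, a j * ω j| < ε} ≤
      ENNReal.ofReal ((2 * ρ) ^ (n - 1)) * ENNReal.ofReal (2 * (ε / ‖a‖)) := by
  cases n with
  | zero => exact absurd (Subsingleton.elim a 0) ha
  | succ m =>
    obtain ⟨i, hi⟩ := Finite.exists_max fun j => ‖a j‖
    have hnorm : ‖a‖ = |a i| :=
      le_antisymm ((pi_norm_le_iff_of_nonneg (norm_nonneg _)).2 hi) (norm_le_pi_norm a i)
    have hai : a i ≠ 0 := abs_ne_zero.1 (hnorm ▸ norm_ne_zero_iff.2 ha)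
    rw [hnorm]
    exact volume_slab_le_of_apply_ne_zero a c hai hρ ε

theorem measure_nonDiophantine_le_general
    (n : ℕ) (τ γ ρ : ℝ) (hρ : 0 < ρ)
    (ωstar : Fin n → ℝ) :
    volume {ω : Fin n → ℝ | ‖ω - ωstar‖ ≤ ρ ∧
        ∃ k : Fin n → ℤ, k ≠ 0 ∧
          |∑ i, (k i : ℝ) * ω i| < γ / ((∑ i, |k i| : ℤ) : ℝ) ^ τ}
      ≤ ENNReal.ofReal ((2 * ρ) ^ (n - 1) * (2 * γ)) *
          ∑' k : {k : Fin n → ℤ // k ≠ 0},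
            ENNReal.ofReal (1 / (((∑ i, |k.1 i| : ℤ) : ℝ) ^ τ *
              ‖(fun i => (k.1 i : ℝ) : Fin n → ℝ)‖)) := by
  have hunion : {ω : Fin n → ℝ | ‖ω - ωstar‖ ≤ ρ ∧ ∃ k : Fin n → ℤ, k ≠ 0 ∧
      |∑ i, (k i : ℝ) * ω i| < γ / ((∑ i, |k i| : ℤ) : ℝ) ^ τ} =
      ⋃ k : {k : Fin n → ℤ // k ≠ 0}, {ω | ‖ω - ωstar‖ ≤ ρ ∧
        |∑ i, (k.1 i : ℝ) * ω i| < γ / ((∑ i, |k.1 i| : ℤ) : ℝ) ^ τ} := by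
    ext ω
    simp only [mem_ofPred_eq, mem_iUnion, Subtype.exists, exists_prop]
    tauto
  rw [hunion, ← ENNReal.tsum_mul_left]
  refine (measure_iUnion_le _).trans (ENNReal.tsum_le_tsum fun k => ?_)
  set L := ((∑ i, |k.1 i| : ℤ) : ℝ) ^ τ
  set a : Fin n → ℝ := fun i => (k.1 i : ℝ)
  have hL : 0 ≤ L := Real.rpow_nonneg (by positivity) τ
  have ha : a ≠ 0 := fun h => k.2 (funext fun i => by simpa [a] using congrFun h i)
  calc _ ≤ ENNReal.ofReal ((2 * ρ) ^ (n - 1)) * ENNReal.ofReal (2 * (γ / L / ‖a‖)) :=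
        volume_slab_le a ωstar ha hρ.le _
    _ = ENNReal.ofReal ((2 * ρ) ^ (n - 1)) * ENNReal.ofReal (2 * γ * (1 / (L * ‖a‖))) := by
        congr 2; ring
    _ = _ := by
        rw [ENNReal.ofReal_mul' (q := 1 / (L * ‖a‖)) (by positivity),
          ENNReal.ofReal_mul (p := (2 * ρ) ^ (n - 1)) (by positivity), mul_assoc]

/-- For `τ > 0`, `γ > 0`, `ρ > 0` and `ω* ∈ ℝⁿ`, the Lebesgue measure of
the set of non-Diophantine frequency vectors in the sup-norm ball of radius `ρ` around
`ω*`, i.e. of those `ω` with `|k·ω| < γ/|k|₁^τ` for some nonzero `k ∈ ℤⁿ`, is at most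
`(2ρ)^{n−1} · 2γ · Σ_{k ≠ 0} 1/(|k|₁^τ ‖k‖_∞)`, the sum being taken in `[0,∞]`. -/
theorem measure_nonDiophantine_le
    (n : ℕ) (hn : 1 ≤ n) (τ γ ρ : ℝ) (hτ : 0 < τ) (hγ : 0 < γ) (hρ : 0 < ρ)
    (ωstar : Fin n → ℝ) :
    volume {ω : Fin n → ℝ | ‖ω - ωstar‖ ≤ ρ ∧
        ∃ k : Fin n → ℤ, k ≠ 0 ∧
          |∑ i, (k i : ℝ) * ω i| < γ / ((∑ i, |k i| : ℤ) : ℝ) ^ τ}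
      ≤ ENNReal.ofReal ((2 * ρ) ^ (n - 1) * (2 * γ)) *
          ∑' k : {k : Fin n → ℤ // k ≠ 0},
            ENNReal.ofReal (1 / (((∑ i, |k.1 i| : ℤ) : ℝ) ^ τ *
              ‖(fun i => (k.1 i : ℝ) : Fin n → ℝ)‖)) :=
  measure_nonDiophantine_le_general n τ γ ρ hρ ωstar
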